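/- The Hom-associator of a Hom-alternative algebra is an alternating function of its three arguments: for every permutation σ of {1,2,3}, as_α(x_{σ(1)}, x_{σ(2)}, x_{σ(3)}) = sign(σ) · as_α(x_1, x_2, x_3). -/

import Mathlib

/-!
Linearizing the left (resp. right) Hom-alternative identity shows that the Hom-associator
changes sign when its first two (resp. last two) arguments are exchanged. These two adjacent
transpositions generate the symmetric group on three letters.
-/

open Equiv Equiv.Perm

theorem Equiv.Perm.map_comp_perm_of_map_comp_swap_castSucc_succ {n : ℕ} {V M : Type*}
    [AddCommGroup M] (f : (Fin (n + 1) → V) → M)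
    (hf : ∀ (i : Fin n) (x : Fin (n + 1) → V), f (x ∘ swap i.castSucc i.succ) = -f x)
    (σ : Perm (Fin (n + 1))) (x : Fin (n + 1) → V) :
    f (x ∘ σ) = (sign σ : ℤ) • f x := by
  have hmem := (mclosure_swap_castSucc_succ n).ge (Submonoid.mem_top σ)
  induction hmem using Submonoid.closure_induction generalizing x with
  | mem _ h =>
    obtain ⟨i, rfl⟩ := h
    rw [hf, sign_swap (Fin.castSucc_lt_succ (i := i)).ne]
    simp
  | one => simp
  | mul σ τ _ _ hσ hτ =>
    rw [coe_mul, ← Function.comp_assoc, hτ, hσ, sign_mul, Units.val_mul, mul_comm, mul_smul]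

section HomAssociator

variable {R V : Type*} [CommSemiring R] [AddCommGroup V] [Module R V]
  (μ : V →ₗ[R] V →ₗ[R] V) (α : V →ₗ[R] V)

def homAssociator (x y z : V) : V :=
  μ (α x) (μ y z) - μ (μ x y) (α z)

theorem homAssociator_swap_left (hl : ∀ x y : V, μ (α x) (μ x y) = μ (μ x x) (α y))
    (x y z : V) : homAssociator μ α y x z = -homAssociator μ α x y z := by
  have key := hl (x + y) z
  simp only [map_add, LinearMap.add_apply, hl x z, hl y z] at key
  unfold homAssociator
  linear_combination (norm := abel) key

theorem homAssociator_swap_right (hr : ∀ x y : V, μ (α x) (μ y y) = μ (μ x y) (α y))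
    (x y z : V) : homAssociator μ α x z y = -homAssociator μ α x y z := by
  have key := hr x (y + z)
  simp only [map_add, LinearMap.add_apply, hr x y, hr x z] at key
  unfold homAssociator
  linear_combination (norm := abel) key

end HomAssociator

theorem hom_associator_alternating_general
    {K V : Type*} [Field K] [AddCommGroup V] [Module K V]
    (μ : V →ₗ[K] V →ₗ[K] V) (α : V →ₗ[K] V)
    (hl : ∀ x y : V, μ (α x) (μ x y) = μ (μ x x) (α y))
    (hr : ∀ x y : V, μ (α x) (μ y y) = μ (μ x y) (α y)) :
    ∀ (σ : Equiv.Perm (Fin 3)) (x : Fin 3 → V),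
      μ (α (x (σ 0))) (μ (x (σ 1)) (x (σ 2))) - μ (μ (x (σ 0)) (x (σ 1))) (α (x (σ 2)))
      = (Equiv.Perm.sign σ : ℤ) •
        (μ (α (x 0)) (μ (x 1) (x 2)) - μ (μ (x 0) (x 1)) (α (x 2))) := by
  intro σ x
  refine map_comp_perm_of_map_comp_swap_castSucc_succ
    (fun x : Fin 3 → V ↦ homAssociator μ α (x 0) (x 1) (x 2)) ?_ σ x
  intro i x
  fin_cases i
  · exact homAssociator_swap_left μ α hl _ _ _
  · exact homAssociator_swap_right μ α hr _ _ _

/-- The Hom-associator of a Hom-alternative algebra is an alternating function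
of its three arguments. -/
theorem hom_associator_alternating
    {K V : Type*} [Field K] [CharZero K] [AddCommGroup V] [Module K V]
    (μ : V →ₗ[K] V →ₗ[K] V) (α : V →ₗ[K] V)
    (hl : ∀ x y : V, μ (α x) (μ x y) = μ (μ x x) (α y))
    (hr : ∀ x y : V, μ (α x) (μ y y) = μ (μ x y) (α y)) :
    ∀ (σ : Equiv.Perm (Fin 3)) (x : Fin 3 → V),
      μ (α (x (σ 0))) (μ (x (σ 1)) (x (σ 2))) - μ (μ (x (σ 0)) (x (σ 1))) (α (x (σ 2)))
      = (Equiv.Perm.sign σ : ℤ) •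
        (μ (α (x 0)) (μ (x 1) (x 2)) - μ (μ (x 0) (x 1)) (α (x 2))) :=
  hom_associator_alternating_general μ α hl hr
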